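/- arXiv:math/0310012 — 2 statements merged into one kernel-verified Lean document; each statement's English description precedes it below -/
import Mathlib

section
/- Let a, b > 0 and let P ~ Beta(a, b). Then for every z ≥ 0, E[(1+zP)^(-(a+b))] = (1+z)^(-a). -/
/-!
The substitution `v = (1 + z) u / (1 + z u)` maps `(0, 1)` onto itself with Jacobian
`(1 + z) / (1 + z u)²` and turns `v^(a-1) (1-v)^(b-1)` into
`(1 + z)^(a-1) u^(a-1) (1-u)^(b-1) (1 + z u)^(2-a-b)`. Hence
`B(a, b) = (1 + z)^a ∫₀¹ u^(a-1) (1-u)^(b-1) (1 + z u)^(-(a+b)) du` for every `z > -1`,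
and dividing by `B(a, b) = Γ(a) Γ(b) / Γ(a + b)` gives the identity.
-/

open MeasureTheory Real Set

/-- Gamma(a,1) distribution on ℝ (density t^(a-1)e^(-t)/Γ(a) on (0,∞)). -/
noncomputable def gammaM (a : ℝ) : Measure ℝ :=
  (volume.restrict (Ioi (0:ℝ))).withDensity
    (fun t => ENNReal.ofReal (t ^ (a - 1) * Real.exp (-t) / Real.Gamma a))

/-- Beta(a,b) distribution on ℝ (density u^(a-1)(1-u)^(b-1)Γ(a+b)/(Γ(a)Γ(b)) on (0,1)). -/
noncomputable def betaM (a b : ℝ) : Measure ℝ :=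
  (volume.restrict (Ioo (0:ℝ) 1)).withDensity
    (fun u => ENNReal.ofReal
      (u ^ (a - 1) * (1 - u) ^ (b - 1) * Real.Gamma (a + b) / (Real.Gamma a * Real.Gamma b)))

lemma integral_Ioo_rpow_mul_one_sub_rpow {a b : ℝ} (ha : 0 < a) (hb : 0 < b) :
    ∫ x in Ioo (0:ℝ) 1, x ^ (a - 1) * (1 - x) ^ (b - 1) =
      Gamma a * Gamma b / Gamma (a + b) := by
  have hβ := ProbabilityTheory.beta_eq_betaIntegralReal a b ha hb
  rw [ProbabilityTheory.beta, Complex.betaIntegral, intervalIntegral.integral_of_le zero_le_one,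
    integral_Ioc_eq_integral_Ioo, ← RCLike.re_to_complex, ← integral_re] at hβ
  · rw [hβ]
    refine setIntegral_congr_fun measurableSet_Ioo fun x ⟨hx0, hx1⟩ ↦ ?_
    norm_cast
    rw [← Complex.ofReal_cpow hx0.le, ← Complex.ofReal_cpow (by linarith), RCLike.re_to_complex,
      Complex.re_mul_ofReal, Complex.ofReal_re]
  · have := Complex.betaIntegral_convergent (u := a) (v := b) (by simpa) (by simpa)
    rwa [intervalIntegrable_iff_integrableOn_Ioc_of_le zero_le_one, IntegrableOn,
      ← Measure.restrict_congr_set Ioo_ae_eq_Ioc] at this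

lemma integral_betaM {a b : ℝ} (ha : 0 < a) (hb : 0 < b) (f : ℝ → ℝ) :
    ∫ u, f u ∂betaM a b = Gamma (a + b) / (Gamma a * Gamma b) *
      ∫ u in Ioo (0:ℝ) 1, u ^ (a - 1) * (1 - u) ^ (b - 1) * f u := by
  have hG := Gamma_pos_of_pos (add_pos ha hb)
  have hGa := Gamma_pos_of_pos ha
  have hGb := Gamma_pos_of_pos hb
  rw [betaM, integral_withDensity_eq_integral_toReal_smul (by fun_prop)
    (ae_of_all _ fun _ ↦ ENNReal.ofReal_lt_top), ← integral_const_mul]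
  refine setIntegral_congr_fun measurableSet_Ioo fun u ⟨hu0, hu1⟩ ↦ ?_
  have hu1' : 0 < 1 - u := by linarith
  rw [ENNReal.toReal_ofReal (by positivity), smul_eq_mul]
  ring

noncomputable def betaSubst (z u : ℝ) : ℝ := (1 + z) * u / (1 + z * u)

section BetaSubstitution

variable {z : ℝ}

lemma one_add_mul_pos (hz : -1 < z) {u : ℝ} (hu : u ∈ Ioo (0:ℝ) 1) : 0 < 1 + z * u := by
  nlinarith [hu.1, hu.2]

lemma one_sub_betaSubst {u : ℝ} (hu : 1 + z * u ≠ 0) :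
    1 - betaSubst z u = (1 - u) / (1 + z * u) := by
  rw [betaSubst]; field_simp; ring

lemma betaSubst_image (hz : -1 < z) : betaSubst z '' Ioo 0 1 = Ioo 0 1 := by
  refine Subset.antisymm (MapsTo.image_subset fun u hu ↦ ?_) fun v ⟨hv0, hv1⟩ ↦ ?_
  · have h1 := one_add_mul_pos hz hu
    refine ⟨div_pos (mul_pos (by linarith) hu.1) h1, (div_lt_one h1).2 (by nlinarith [hu.2])⟩
  · have hd := one_add_mul_pos hz (u := 1 - v) ⟨by linarith, by linarith⟩
    refine ⟨v / (1 + z * (1 - v)), ⟨div_pos hv0 hd, (div_lt_one hd).2 (by nlinarith)⟩, ?_⟩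
    have hz1 : 1 + z ≠ 0 := by linarith
    have hq : 1 + z * (v / (1 + z * (1 - v))) = (1 + z) / (1 + z * (1 - v)) := by
      field_simp; ring
    rw [betaSubst, hq]
    field_simp

lemma injOn_betaSubst (hz : -1 < z) : InjOn (betaSubst z) (Ioo 0 1) := by
  intro u hu v hv h
  have h1 := one_add_mul_pos hz hu
  have h2 := one_add_mul_pos hz hv
  rw [betaSubst, betaSubst, div_eq_div_iff h1.ne' h2.ne'] at h
  nlinarith

lemma hasDerivAt_betaSubst {u : ℝ} (hu : 1 + z * u ≠ 0) :
    HasDerivAt (betaSubst z) ((1 + z) / (1 + z * u) ^ 2) u := by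
  refine (((hasDerivAt_id u).const_mul (1 + z)).div
    (((hasDerivAt_id u).const_mul z).const_add 1) hu).congr_deriv ?_
  simp only [id, mul_one]
  ring

lemma abs_deriv_smul_betaSubst_rpow (hz : -1 < z) (a b : ℝ) {u : ℝ}
    (hu : u ∈ Ioo (0:ℝ) 1) :
    |(1 + z) / (1 + z * u) ^ 2| • (betaSubst z u ^ (a - 1) * (1 - betaSubst z u) ^ (b - 1)) =
      (1 + z) ^ a * (u ^ (a - 1) * (1 - u) ^ (b - 1) * (1 + z * u) ^ (-(a + b))) := by
  have hc : 0 < 1 + z := by linarith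
  have hw := one_add_mul_pos hz hu
  have hu1 : 0 < 1 - u := by linarith [hu.2]
  have hφ : betaSubst z u ^ (a - 1) =
      (1 + z) ^ (a - 1) * u ^ (a - 1) / (1 + z * u) ^ (a - 1) := by
    rw [betaSubst, div_rpow (mul_pos hc hu.1).le hw.le, mul_rpow hc.le hu.1.le]
  have hψ : (1 - betaSubst z u) ^ (b - 1) = (1 - u) ^ (b - 1) / (1 + z * u) ^ (b - 1) := by
    rw [one_sub_betaSubst hw.ne', div_rpow hu1.le hw.le]
  have hw_pow : (1 + z * u) ^ (-(a + b)) =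
      ((1 + z * u) ^ (a - 1) * (1 + z * u) ^ (b - 1) * (1 + z * u) ^ 2)⁻¹ := by
    rw [← rpow_two, ← rpow_add hw, ← rpow_add hw, ← rpow_neg hw.le]
    ring_nf
  have hc_pow : (1 + z) ^ a = (1 + z) * (1 + z) ^ (a - 1) := by
    conv_lhs => rw [← add_sub_cancel 1 a]
    rw [rpow_add hc, rpow_one]
  rw [smul_eq_mul, abs_of_pos (by positivity), hφ, hψ, hw_pow, hc_pow]
  field_simp

lemma integral_Ioo_mul_one_add_mul_rpow_neg (hz : -1 < z) (a b : ℝ) :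
    ∫ u in Ioo (0:ℝ) 1, u ^ (a - 1) * (1 - u) ^ (b - 1) * (1 + z * u) ^ (-(a + b)) =
      (1 + z) ^ (-a) * ∫ v in Ioo (0:ℝ) 1, v ^ (a - 1) * (1 - v) ^ (b - 1) := by
  have hcov := integral_image_eq_integral_abs_deriv_smul measurableSet_Ioo
    (fun u hu ↦ (hasDerivAt_betaSubst (one_add_mul_pos hz hu).ne').hasDerivWithinAt)
    (injOn_betaSubst hz) fun v ↦ v ^ (a - 1) * (1 - v) ^ (b - 1)
  rw [betaSubst_image hz, setIntegral_congr_fun measurableSet_Ioo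
    fun u hu ↦ abs_deriv_smul_betaSubst_rpow hz a b hu, integral_const_mul] at hcov
  rw [hcov, ← mul_assoc, ← rpow_add (by linarith), neg_add_cancel, rpow_zero, one_mul]

end BetaSubstitution

/-- Scalar Markov–Krein identity: if P ~ Beta(a,b) then E[(1+zP)^(-(a+b))] = (1+z)^(-a). -/
theorem stmt6 (a b z : ℝ) (ha : 0 < a) (hb : 0 < b) (hz : 0 ≤ z) :
    ∫ u, (1 + z * u) ^ (-(a + b)) ∂(betaM a b) = (1 + z) ^ (-a) := by
  rw [integral_betaM ha hb, integral_Ioo_mul_one_add_mul_rpow_neg (by linarith),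
    integral_Ioo_rpow_mul_one_sub_rpow ha hb]
  have := Gamma_pos_of_pos (add_pos ha hb)
  have := Gamma_pos_of_pos ha
  have := Gamma_pos_of_pos hb
  field_simp
end

section
/- Let θ > 0. Let X ~ Gamma(a,1) with 0 < a < θ (realized as a gamma linear functional), T₁ ~ Gamma(1,1) (standard exponential), B ~ Bernoulli(a/θ), and U ~ Beta(θ,1), all jointly independent. Then U·(X + T₁·B) has the same distribution as X. -/
open MeasureTheory Real Set

/-- The Bernoulli(p) distribution on ℝ. -/
noncomputable def bernoulliM (p : ℝ) : Measure ℝ :=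
  ENNReal.ofReal p • Measure.dirac (1:ℝ) + ENNReal.ofReal (1 - p) • Measure.dirac (0:ℝ)

/-! Write `Y = X + T₁·B`. Splitting on `B`, the law of `Y` is the mixture
`(a/θ)·Gamma(a+1) + (1 - a/θ)·Gamma(a)`, whose density on `(0, ∞)` is
`y^(a-1) e^(-y) (y + θ - a) / (θ Γ(a))`. Since `U ~ Beta(θ,1)` has density `θ u^(θ-1)` on `(0,1)`,
the product `U·Y` has density `z^(θ-1)/Γ(a) · ∫_z^∞ y^(a-θ-1) e^(-y) (y + θ - a) dy` at `z > 0`.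
The integrand is the derivative of `-y^(a-θ) e^(-y)`, so the integral equals `z^(a-θ) e^(-z)`,
and `U·Y` has the Gamma(a) density. -/

open scoped ENNReal

noncomputable def gammaDensity (s : ℝ) : ℝ → ℝ≥0∞ :=
  (Ioi 0).indicator fun t => ENNReal.ofReal (t ^ (s - 1) * exp (-t) / Gamma s)

@[fun_prop]
lemma measurable_gammaDensity (s : ℝ) : Measurable (gammaDensity s) :=
  Measurable.indicator (by fun_prop) measurableSet_Ioi

lemma gammaDensity_of_pos {s x : ℝ} (hx : 0 < x) :
    gammaDensity s x = ENNReal.ofReal (x ^ (s - 1) * exp (-x) / Gamma s) :=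
  indicator_of_mem (s := Ioi 0) hx _

lemma gammaDensity_of_nonpos {s x : ℝ} (hx : x ≤ 0) : gammaDensity s x = 0 :=
  indicator_of_notMem (s := Ioi 0) hx.not_gt _

lemma gammaM_eq_withDensity (s : ℝ) : gammaM s = volume.withDensity (gammaDensity s) := by
  rw [gammaM, gammaDensity, withDensity_indicator measurableSet_Ioi]

instance (s : ℝ) : SFinite (gammaM s) := by
  rw [gammaM]
  infer_instance

lemma isProbabilityMeasure_gammaM {s : ℝ} (hs : 0 < s) : IsProbabilityMeasure (gammaM s) := by
  have hΓ := Gamma_pos_of_pos hs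
  constructor
  rw [gammaM, withDensity_apply _ MeasurableSet.univ, Measure.restrict_univ,
    ← ofReal_integral_eq_lintegral_ofReal]
  · simp_rw [mul_comm _ (exp _)]
    rw [integral_div, ← Gamma_eq_integral hs, div_self hΓ.ne', ENNReal.ofReal_one]
  · exact ((GammaIntegral_convergent hs).congr_fun (fun x _ => mul_comm _ _)
      measurableSet_Ioi).div_const _
  · filter_upwards [ae_restrict_mem measurableSet_Ioi] with x hx
    have : (0:ℝ) < x := hx
    positivity

noncomputable def betaOneDensity (θ : ℝ) : ℝ → ℝ≥0∞ :=
  (Ioo 0 1).indicator fun u => ENNReal.ofReal (θ * u ^ (θ - 1))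

@[fun_prop]
lemma measurable_betaOneDensity (θ : ℝ) : Measurable (betaOneDensity θ) :=
  Measurable.indicator (by fun_prop) measurableSet_Ioo

lemma betaM_one_eq_withDensity {θ : ℝ} (hθ : 0 < θ) :
    betaM θ 1 = volume.withDensity (betaOneDensity θ) := by
  rw [betaM, betaOneDensity, ← withDensity_indicator measurableSet_Ioo]
  congr with u
  simp only [sub_self, rpow_zero, mul_one, Gamma_one, Gamma_add_one hθ.ne']
  have := (Gamma_pos_of_pos hθ).ne'
  congr 1
  field_simp

lemma gammaDensity_lconvolution_gammaDensity_one {a : ℝ} (ha : 0 < a) :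
    gammaDensity a ⋆ₗ gammaDensity 1 = gammaDensity (a + 1) := by
  have hΓ := Gamma_pos_of_pos ha
  ext z
  rw [lconvolution_def]
  rcases le_or_gt z 0 with hz | hz
  · have hvanish : ∀ y, gammaDensity a y * gammaDensity 1 (-y + z) = 0 := by
      intro y
      rcases le_or_gt y 0 with hy | hy
      · rw [gammaDensity_of_nonpos hy, zero_mul]
      · rw [gammaDensity_of_nonpos (s := 1) (by linarith), mul_zero]
    rw [lintegral_congr hvanish, lintegral_zero, gammaDensity_of_nonpos hz]
  have hint : ∫⁻ y in Ioo 0 z, ENNReal.ofReal (y ^ (a - 1)) = ENNReal.ofReal (z ^ a / a) := by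
    rw [← ofReal_integral_eq_lintegral_ofReal, ← integral_Ioc_eq_integral_Ioo,
      ← intervalIntegral.integral_of_le hz.le, integral_rpow (Or.inl (by linarith)),
      sub_add_cancel, zero_rpow ha.ne', sub_zero]
    · exact ((intervalIntegrable_iff_integrableOn_Ioc_of_le hz.le).mp
        (intervalIntegral.intervalIntegrable_rpow' (by linarith))).mono_set Ioo_subset_Ioc_self
    · filter_upwards [ae_restrict_mem measurableSet_Ioo] with y hy
      exact rpow_nonneg hy.1.le _
  have hpointwise : ∀ y, gammaDensity a y * gammaDensity 1 (-y + z) =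
      (Ioo 0 z).indicator (fun y => ENNReal.ofReal (exp (-z) / Gamma a) *
        ENNReal.ofReal (y ^ (a - 1))) y := by
    intro y
    by_cases hy : y ∈ Ioo 0 z
    · have : 0 < -y + z := by linarith [hy.2]
      rw [indicator_of_mem hy, gammaDensity_of_pos hy.1, gammaDensity_of_pos this,
        ← ENNReal.ofReal_mul (div_nonneg (by have := hy.1; positivity) hΓ.le),
        ← ENNReal.ofReal_mul (div_nonneg (exp_pos _).le hΓ.le)]
      congr 1
      rw [sub_self, rpow_zero, Gamma_one, show -z = -y + -(-y + z) by ring, exp_add]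
      ring
    · rw [indicator_of_notMem hy]
      rcases le_or_gt y 0 with hy0 | hy0
      · rw [gammaDensity_of_nonpos hy0, zero_mul]
      · rw [gammaDensity_of_nonpos (s := 1) (by
          by_contra! h; exact hy ⟨hy0, by linarith⟩), mul_zero]
  rw [lintegral_congr hpointwise, lintegral_indicator measurableSet_Ioo,
    lintegral_const_mul _ (by fun_prop), hint,
    ← ENNReal.ofReal_mul (div_nonneg (exp_pos _).le hΓ.le), gammaDensity_of_pos hz,
    add_sub_cancel_right, Gamma_add_one ha.ne']
  congr 1
  field_simp

lemma gammaM_conv_gammaM_one {a : ℝ} (ha : 0 < a) : gammaM a ∗ gammaM 1 = gammaM (a + 1) := by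
  rw [gammaM_eq_withDensity, gammaM_eq_withDensity, gammaM_eq_withDensity,
    conv_withDensity_eq_lconvolution (by fun_prop) (by fun_prop),
    gammaDensity_lconvolution_gammaDensity_one ha]

instance (p : ℝ) : SFinite (bernoulliM p) := by
  rw [bernoulliM]
  infer_instance

lemma map_prod_bernoulliM {α β : Type*} [MeasurableSpace α] [MeasurableSpace β]
    (ρ : Measure α) [SFinite ρ] {f : α × ℝ → β} (hf : Measurable f) (p : ℝ) :
    (ρ.prod (bernoulliM p)).map f =
      ENNReal.ofReal p • ρ.map (fun x => f (x, 1)) +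
        ENNReal.ofReal (1 - p) • ρ.map (fun x => f (x, 0)) := by
  rw [bernoulliM, Measure.prod_add, Measure.prod_smul_right, Measure.prod_smul_right,
    Measure.prod_dirac, Measure.prod_dirac, Measure.map_add _ _ hf, Measure.map_smul,
    Measure.map_smul, Measure.map_map hf (by fun_prop), Measure.map_map hf (by fun_prop)]
  rfl

lemma map_add_mul_bernoulliM {a : ℝ} (ha : 0 < a) (p : ℝ) :
    ((gammaM a).prod ((gammaM 1).prod (bernoulliM p))).map
        (fun w : ℝ × ℝ × ℝ => w.1 + w.2.1 * w.2.2) =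
      ENNReal.ofReal p • gammaM (a + 1) + ENNReal.ofReal (1 - p) • gammaM a := by
  have := isProbabilityMeasure_gammaM one_pos
  rw [← Measure.prodAssoc_prod, Measure.map_map (by fun_prop) (by fun_prop),
    map_prod_bernoulliM _ (by fun_prop)]
  simp only [Function.comp_def, MeasurableEquiv.prodAssoc, MeasurableEquiv.coe_mk,
    Equiv.prodAssoc_apply, mul_one, mul_zero, add_zero]
  rw [← Measure.conv, gammaM_conv_gammaM_one ha, ← Measure.fst, Measure.fst_prod]

lemma lintegral_comp_mul_right_of_ne_zero {c : ℝ} (hc : c ≠ 0) {f : ℝ → ℝ≥0∞}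
    (hf : Measurable f) :
    ∫⁻ u, f (u * c) = ENNReal.ofReal |c|⁻¹ * ∫⁻ z, f z := by
  rw [← lintegral_map hf (measurable_mul_const c), Real.map_volume_mul_right hc,
    lintegral_smul_measure, abs_inv, smul_eq_mul]

lemma map_mul_withDensity_prod {g : ℝ → ℝ≥0∞} (hg : Measurable g) (μ : Measure ℝ)
    [SFinite μ] [NullSingletonClass μ] :
    ((volume.withDensity g).prod μ).map (fun p => p.1 * p.2) =
      volume.withDensity fun z => ∫⁻ y, ENNReal.ofReal |y|⁻¹ * g (z / y) ∂μ := by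
  refine Measure.ext_of_lintegral _ fun φ hφ => ?_
  have hinner : ∀ y ≠ 0, ∫⁻ u, φ (u * y) ∂(volume.withDensity g) =
      ∫⁻ z, ENNReal.ofReal |y|⁻¹ * g (z / y) * φ z := by
    intro y hy
    calc ∫⁻ u, φ (u * y) ∂(volume.withDensity g)
        = ∫⁻ u, (fun z => g (z / y) * φ z) (u * y) := by
          rw [lintegral_withDensity_eq_lintegral_mul _ hg (by fun_prop)]
          simp only [Pi.mul_apply, mul_div_cancel_right₀ _ hy]
      _ = ∫⁻ z, ENNReal.ofReal |y|⁻¹ * g (z / y) * φ z := by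
          rw [lintegral_comp_mul_right_of_ne_zero hy (f := fun z => g (z / y) * φ z)
            (by fun_prop), ← lintegral_const_mul _ (by fun_prop)]
          simp only [mul_assoc]
  calc ∫⁻ z, φ z ∂((volume.withDensity g).prod μ).map (fun p => p.1 * p.2)
      = ∫⁻ y, ∫⁻ u, φ (u * y) ∂(volume.withDensity g) ∂μ := by
        rw [lintegral_map hφ (by fun_prop), lintegral_prod_symm' _ (by fun_prop)]
    _ = ∫⁻ y, (∫⁻ z, ENNReal.ofReal |y|⁻¹ * g (z / y) * φ z) ∂μ := by
        refine lintegral_congr_ae ?_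
        filter_upwards [μ.ae_ne 0] with y hy using hinner y hy
    _ = ∫⁻ z, (∫⁻ y, ENNReal.ofReal |y|⁻¹ * g (z / y) ∂μ) * φ z := by
        rw [lintegral_lintegral_swap (by fun_prop)]
        exact lintegral_congr fun z => lintegral_mul_const (φ z) (by fun_prop)
    _ = _ := (lintegral_withDensity_eq_lintegral_mul _ (by fun_prop) hφ).symm

noncomputable def gammaMixtureDensity (θ a : ℝ) : ℝ → ℝ≥0∞ :=
  (Ioi 0).indicator fun y =>
    ENNReal.ofReal (y ^ (a - 1) * exp (-y) * (y + (θ - a)) / (θ * Gamma a))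

@[fun_prop]
lemma measurable_gammaMixtureDensity (θ a : ℝ) : Measurable (gammaMixtureDensity θ a) :=
  Measurable.indicator (by fun_prop) measurableSet_Ioi

lemma gammaM_mixture_eq_withDensity {θ a : ℝ} (hθ : 0 < θ) (ha : 0 < a) (haθ : a ≤ θ) :
    ENNReal.ofReal (a / θ) • gammaM (a + 1) + ENNReal.ofReal (1 - a / θ) • gammaM a =
      volume.withDensity (gammaMixtureDensity θ a) := by
  have hΓ := Gamma_pos_of_pos ha
  rw [gammaM_eq_withDensity, gammaM_eq_withDensity, ← withDensity_smul _ (by fun_prop),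
    ← withDensity_smul _ (by fun_prop), ← withDensity_add_left (by fun_prop)]
  congr with y
  simp only [Pi.add_apply, Pi.smul_apply, smul_eq_mul]
  rcases le_or_gt y 0 with hy | hy
  · rw [gammaDensity_of_nonpos hy, gammaDensity_of_nonpos hy, gammaMixtureDensity,
      indicator_of_notMem (s := Ioi 0) hy.not_gt, mul_zero, mul_zero, add_zero]
  have hp : a / θ ≤ 1 := (div_le_one hθ).mpr haθ
  rw [gammaDensity_of_pos hy, gammaDensity_of_pos hy, gammaMixtureDensity,
    indicator_of_mem (show y ∈ Ioi 0 from hy), ← ENNReal.ofReal_mul (by positivity),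
    ← ENNReal.ofReal_mul (by linarith), ← ENNReal.ofReal_add (by positivity)
      (mul_nonneg (by linarith) (div_nonneg (by positivity) hΓ.le))]
  congr 1
  rw [add_sub_cancel_right, Gamma_add_one ha.ne', rpow_sub_one hy.ne' a]
  field_simp

lemma lintegral_Ioi_rpow_mul_exp_neg_mul_sub {c z : ℝ} (hc : c ≤ 0) (hz : 0 < z) :
    ∫⁻ y in Ioi z, ENNReal.ofReal (y ^ (c - 1) * exp (-y) * (y - c)) =
      ENNReal.ofReal (z ^ c * exp (-z)) := by
  have hderiv : ∀ y ∈ Ici z, HasDerivAt (fun y => -(y ^ c * exp (-y)))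
      (y ^ (c - 1) * exp (-y) * (y - c)) y := by
    intro y hy
    have hy0 : 0 < y := hz.trans_le hy
    refine ((hasDerivAt_rpow_const (p := c) (Or.inl hy0.ne')).mul
      (hasDerivAt_neg y).exp).neg.congr_deriv ?_
    rw [rpow_sub_one hy0.ne']
    field_simp
    ring
  have hnonneg : ∀ y ∈ Ioi z, 0 ≤ y ^ (c - 1) * exp (-y) * (y - c) := fun y hy => by
    have : 0 < y := hz.trans hy
    have : 0 ≤ y - c := by linarith
    positivity
  have htendsto : Filter.Tendsto (fun y => -(y ^ c * exp (-y))) Filter.atTop (nhds 0) := by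
    simpa using (tendsto_rpow_mul_exp_neg_mul_atTop_nhds_zero c 1 one_pos).neg
  rw [← ofReal_integral_eq_lintegral_ofReal
      (integrableOn_Ioi_deriv_of_nonneg' hderiv hnonneg htendsto)
      ((ae_restrict_mem measurableSet_Ioi).mono hnonneg),
    integral_Ioi_of_hasDerivAt_of_nonneg' hderiv hnonneg htendsto, zero_sub, neg_neg]

lemma lintegral_gammaMixtureDensity_mul_betaOneDensity {θ a : ℝ} (hθ : 0 < θ) (ha : 0 < a)
    (haθ : a ≤ θ) (z : ℝ) :
    ∫⁻ y, gammaMixtureDensity θ a y * (ENNReal.ofReal |y|⁻¹ * betaOneDensity θ (z / y)) =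
      gammaDensity a z := by
  have hΓ := Gamma_pos_of_pos ha
  have hvanish : ∀ y, y ∉ Ioi z ∨ z ≤ 0 →
      gammaMixtureDensity θ a y * (ENNReal.ofReal |y|⁻¹ * betaOneDensity θ (z / y)) = 0 := by
    intro y hyz
    rcases le_or_gt y 0 with hy | hy
    · rw [gammaMixtureDensity, indicator_of_notMem (s := Ioi 0) hy.not_gt, zero_mul]
    suffices z / y ∉ Ioo 0 1 by rw [betaOneDensity, indicator_of_notMem this, mul_zero, mul_zero]
    rintro ⟨hzy0, hzy1⟩
    rw [div_pos_iff_of_pos_right hy] at hzy0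
    rw [div_lt_one hy] at hzy1
    exact hyz.elim (· hzy1) hzy0.not_ge
  rcases le_or_gt z 0 with hz | hz
  · rw [lintegral_congr fun y => hvanish y (Or.inr hz), lintegral_zero, gammaDensity_of_nonpos hz]
  have hpointwise : ∀ y,
      gammaMixtureDensity θ a y * (ENNReal.ofReal |y|⁻¹ * betaOneDensity θ (z / y)) =
        (Ioi z).indicator (fun y => ENNReal.ofReal (z ^ (θ - 1) / Gamma a) *
          ENNReal.ofReal (y ^ (a - θ - 1) * exp (-y) * (y - (a - θ)))) y := by
    intro y
    by_cases hyz : y ∈ Ioi z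
    swap
    · rw [hvanish y (Or.inl hyz), indicator_of_notMem hyz]
    have hy : 0 < y := hz.trans hyz
    have hzy : z / y ∈ Ioo 0 1 := ⟨div_pos hz hy, (div_lt_one hy).mpr hyz⟩
    rw [indicator_of_mem hyz, gammaMixtureDensity, indicator_of_mem (show y ∈ Ioi 0 from hy),
      betaOneDensity, indicator_of_mem hzy, ← ENNReal.ofReal_mul (by positivity),
      ← ENNReal.ofReal_mul (by positivity), ← ENNReal.ofReal_mul (by positivity)]
    have hsplit : y ^ (a - 1) = y ^ (a - θ - 1) * y ^ (θ - 1) * y := by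
      rw [← rpow_add hy, ← rpow_add_one hy.ne']
      ring_nf
    congr 1
    rw [hsplit, div_rpow hz.le hy.le, abs_of_pos hy]
    field_simp
    ring
  rw [lintegral_congr hpointwise, lintegral_indicator measurableSet_Ioi,
    lintegral_const_mul _ (by fun_prop),
    lintegral_Ioi_rpow_mul_exp_neg_mul_sub (by linarith) hz,
    ← ENNReal.ofReal_mul (div_nonneg (by positivity) hΓ.le), gammaDensity_of_pos hz]
  congr 1
  rw [div_mul_eq_mul_div, ← mul_assoc, ← rpow_add hz]
  ring_nf

/-- Fixed-point identity for gamma linear functionals (Proposition 4.1(iv), two-point case):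
U·(X + T₁·B) =_d X where X ~ Gamma(a,1), T₁ ~ Gamma(1,1), B ~ Bernoulli(a/θ),
U ~ Beta(θ,1), jointly independent, 0 < a < θ. -/
theorem stmt16 (θ a : ℝ) (hθ : 0 < θ) (ha : 0 < a) (haθ : a < θ) :
    Measure.map (fun w : ℝ × ℝ × ℝ × ℝ => w.1 * (w.2.1 + w.2.2.1 * w.2.2.2))
        ((betaM θ 1).prod ((gammaM a).prod ((gammaM 1).prod (bernoulliM (a / θ)))))
      = gammaM a := by
  have hmixture := map_add_mul_bernoulliM ha (a / θ)
  rw [gammaM_mixture_eq_withDensity hθ ha haθ.le] at hmixture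
  calc _ = (((betaM θ 1).prod ((gammaM a).prod ((gammaM 1).prod (bernoulliM (a / θ))))).map
          (Prod.map id fun w : ℝ × ℝ × ℝ => w.1 + w.2.1 * w.2.2)).map
            (fun q : ℝ × ℝ => q.1 * q.2) := by
        rw [Measure.map_map (by fun_prop) (by fun_prop)]
        rfl
    _ = ((volume.withDensity (betaOneDensity θ)).prod
          (volume.withDensity (gammaMixtureDensity θ a))).map
            (fun q : ℝ × ℝ => q.1 * q.2) := by
        rw [betaM_one_eq_withDensity hθ, ← Measure.map_prod_map _ _ measurable_id (by fun_prop),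
          Measure.map_id, hmixture]
    _ = volume.withDensity (gammaDensity a) := by
        rw [map_mul_withDensity_prod (by fun_prop)]
        congr with z
        rw [lintegral_withDensity_eq_lintegral_mul _ (by fun_prop) (by fun_prop)]
        exact lintegral_gammaMixtureDensity_mul_betaOneDensity hθ ha haθ.le z
    _ = gammaM a := (gammaM_eq_withDensity a).symm
end
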